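/- Let G_1 and G_2 be strict, transitively closed episodes with identical nodes and N edges each, sharing N − 1 mutual edges. Let e_1 = (x_1, y_1) be the unique edge in E(G_1) ∖ E(G_2) and e_2 = (x_2, y_2) the unique edge in E(G_2) ∖ E(G_1), and let H = G_1 + e_2. Assume H has no cycles. Then H is strict and transitively closed if and only if one of the following holds: (1) x_1 ≠ y_2 and x_2 ≠ y_1; (2) x_1 ≠ y_2, x_2 = y_1, and (x_1, y_2) ∈ E(G_1); (3) x_1 = y_2, x_2 ≠ y_1, and (x_2, y_1) ∈ E(G_1). Moreover, if H is strict and transitively closed, then e_1 and e_2 are both skeleton edges in H. -/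

import Mathlib

open scoped Classical

/-- An episode: a finite directed acyclic graph with nodes drawn from `ℕ`,
labelled by symbols of an alphabet `α`. -/
structure Episode (α : Type*) where
  nodes : Finset ℕ
  edge : ℕ → ℕ → Prop
  lab : ℕ → α
  edge_mem : ∀ ⦃x y : ℕ⦄, edge x y → x ∈ nodes ∧ y ∈ nodes

namespace Episode

variable {α : Type*}

/-- Transitively closed: whenever there is a directed path from `u` to `v`,
`(u,v)` is an edge. -/
def TransClosed (G : Episode α) : Prop :=
  ∀ ⦃u v : ℕ⦄, Relation.TransGen G.edge u v → G.edge u v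

/-- Acyclic: no directed cycles. -/
def Acyclic (G : Episode α) : Prop := ∀ v : ℕ, ¬ Relation.TransGen G.edge v v

/-- Strict: any two distinct nodes sharing the same label are joined by a
directed path. -/
def Strict (G : Episode α) : Prop :=
  ∀ u ∈ G.nodes, ∀ v ∈ G.nodes, u ≠ v → G.lab u = G.lab v →
    Relation.TransGen G.edge u v ∨ Relation.TransGen G.edge v u

/-- The class `𝒮` of strict, transitively closed (acyclic) episodes. -/
def inS (G : Episode α) : Prop := G.Acyclic ∧ G.TransClosed ∧ G.Strict

/-- A sequence `s` covers an episode `G`: there is an injective map from the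
nodes of `G` to indices of `s` matching labels and respecting edges. -/
def Covers (s : List α) (G : Episode α) : Prop :=
  ∃ f : {v // v ∈ G.nodes} → Fin s.length,
    Function.Injective f ∧ (∀ v, s.get (f v) = G.lab v.1) ∧
      ∀ u v, G.edge u.1 v.1 → f u < f v

/-- `f` witnesses that `s` is an instance of `G`: a bijective valid mapping. -/
def IsInstanceMap (s : List α) (G : Episode α)
    (f : {v // v ∈ G.nodes} → Fin s.length) : Prop :=
  Function.Bijective f ∧ (∀ v, s.get (f v) = G.lab v.1) ∧
    ∀ u v, G.edge u.1 v.1 → f u < f v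

/-- The subgraph of `H` induced on a set `U` of nodes. -/
def restrict (H : Episode α) (U : Finset ℕ) : Episode α where
  nodes := U
  edge := fun x y => x ∈ U ∧ y ∈ U ∧ H.edge x y
  lab := H.lab
  edge_mem := by rintro x y ⟨h1, h2, -⟩; exact ⟨h1, h2⟩

/-- `G ⪯ H`: `G` is a subepisode of `H`.  There is a subgraph of `H` with as
many nodes as `G` such that every sequence covering that subgraph covers `G`. -/
def Subep (G H : Episode α) : Prop :=
  ∃ U : Finset ℕ, U ⊆ H.nodes ∧ U.card = G.nodes.card ∧
    ∀ s : List α, Covers s (H.restrict U) → Covers s G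

/-- `G ≺ H`: proper subepisode. -/
def ProperSubep (G H : Episode α) : Prop := Subep G H ∧ ¬ Subep H G

/-- `G ∼ H`: every sequence covers `G` iff it covers `H`. -/
def Equivalent (G H : Episode α) : Prop := ∀ s : List α, Covers s G ↔ Covers s H

/-- The nodes of `G` are `0, …, card − 1` listed in the canonical order:
labels increase, and nodes with equal labels are ordered by the edges. -/
def CanonicallyIndexed [LinearOrder α] (G : Episode α) : Prop :=
  G.nodes = Finset.range G.nodes.card ∧
    ∀ u ∈ G.nodes, ∀ v ∈ G.nodes, u < v →
      G.lab u < G.lab v ∨ (G.lab u = G.lab v ∧ G.edge u v)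

/-- An occurrence (instance) of `G` inside `s` whose span is smaller than the
window size `ρ`: an injective valid mapping with `max f − min f < ρ`. -/
def IsOcc (s : List α) (ρ : ℕ) (G : Episode α)
    (f : {v // v ∈ G.nodes} → Fin s.length) : Prop :=
  Function.Injective f ∧ (∀ v, s.get (f v) = G.lab v.1) ∧
    (∀ u v, G.edge u.1 v.1 → f u < f v) ∧
    ∀ u v, (f u : ℕ) < (f v : ℕ) + ρ

/-- `G` occurs in `s` within some window of length at most `ρ`. -/
def Occurs (s : List α) (ρ : ℕ) (G : Episode α) : Prop := ∃ f, IsOcc s ρ G f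

/-- The symbol `x` occurs in `s` inside the interval `[min f, max f]` of an
occurrence `f`. -/
def SymInWindow (s : List α) {G : Episode α}
    (f : {v // v ∈ G.nodes} → Fin s.length) (x : α) : Prop :=
  ∃ i : Fin s.length, s.get i = x ∧ (∃ u, f u ≤ i) ∧ ∃ v, i ≤ f v

/-- The node closure `cl_N`: augment `G` with one new isolated node labelled
`x` for each symbol `x` of `s`, not labelling a node of `G`, that occurs inside
the interval of every occurrence of `G` (with span `< ρ`). -/
noncomputable def clN [LinearOrder α] (s : List α) (ρ : ℕ) (G : Episode α) :
    Episode α :=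
  let newLabs : List α := (s.toFinset.filter
      (fun x => (∀ f, IsOcc s ρ G f → SymInWindow s f x) ∧
        ∀ v ∈ G.nodes, G.lab v ≠ x)).sort (· ≤ ·)
  let base : ℕ := G.nodes.sup id + 1
  { nodes := G.nodes ∪ (Finset.range newLabs.length).image (fun i => base + i)
    edge := G.edge
    lab := fun v =>
      if h : base ≤ v ∧ v - base < newLabs.length ∧ v ∉ G.nodes then
        newLabs.get ⟨v - base, h.2.1⟩
      else G.lab v
    edge_mem := by
      intro x y h
      exact ⟨Finset.mem_union_left _ (G.edge_mem h).1,
        Finset.mem_union_left _ (G.edge_mem h).2⟩ }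

/-- The edge closure `cl_E`: the maximal episode covered by all instances of
`G` in `s` with span `< ρ`; it has an edge `(x,y)` whenever the (unique) valid
mapping of every such instance places `x` before `y`. -/
def clE (s : List α) (ρ : ℕ) (G : Episode α) : Episode α where
  nodes := G.nodes
  edge := fun x y => ∃ (hx : x ∈ G.nodes) (hy : y ∈ G.nodes),
    ∀ f, IsOcc s ρ G f → f ⟨x, hx⟩ < f ⟨y, hy⟩
  lab := G.lab
  edge_mem := by rintro x y ⟨hx, hy, -⟩; exact ⟨hx, hy⟩

/-- The `i`-closure `icl(G) = cl_E(cl_N(G))`. -/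
noncomputable def icl [LinearOrder α] (s : List α) (ρ : ℕ) (G : Episode α) :
    Episode α :=
  clE s ρ (clN s ρ G)

/-- The window `s[a, b]` (0-based, inclusive endpoints). -/
def window (s : List α) (a b : ℕ) : List α := (s.take (b + 1)).drop a

/-- `s[a,b]` is a minimal window of `G` in `s`: it covers `G` and no proper
subwindow of it covers `G`. -/
def IsMinimalWindow (s : List α) (G : Episode α) (a b : ℕ) : Prop :=
  a ≤ b ∧ b < s.length ∧ Covers (window s a b) G ∧
    ∀ a' b', a ≤ a' → b' ≤ b → a' ≤ b' → (a', b') ≠ (a, b) →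
      ¬ Covers (window s a' b') G

/-- Fixed-window frequency: the number of windows of length `ρ` (indexed by
their right endpoints, windows may stick out of the sequence) covering `G`. -/
noncomputable def freqF (s : List α) (ρ : ℕ) (G : Episode α) : ℕ :=
  ((Finset.range (s.length + ρ - 1)).filter
    (fun b => Covers (window s (b + 1 - ρ) b) G)).card

/-- Disjoint-window frequency: the maximal number of pairwise disjoint
intervals of length at most `ρ` whose windows cover `G`. -/
noncomputable def freqD (s : List α) (ρ : ℕ) (G : Episode α) : ℕ :=
  sSup {n : ℕ | ∃ I : Fin n → ℕ × ℕ,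
    (∀ i, (I i).1 ≤ (I i).2 ∧ (I i).2 < (I i).1 + ρ ∧ (I i).2 < s.length ∧
      Covers (window s (I i).1 (I i).2) G) ∧
    ∀ i j, i ≠ j → (I i).2 < (I j).1 ∨ (I j).2 < (I i).1}

/-- `G` is f-closed w.r.t. the fixed-window frequency. -/
noncomputable def FClosedF (s : List α) (ρ : ℕ) (G : Episode α) : Prop :=
  ¬ ∃ H : Episode α, inS H ∧ ProperSubep G H ∧ freqF s ρ H = freqF s ρ G

/-- `G` is f-closed w.r.t. the disjoint-window frequency. -/
noncomputable def FClosedD (s : List α) (ρ : ℕ) (G : Episode α) : Prop :=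
  ¬ ∃ H : Episode α, inS H ∧ ProperSubep G H ∧ freqD s ρ H = freqD s ρ G

/-- `G − e`: remove an edge. -/
def eraseEdge (G : Episode α) (e : ℕ × ℕ) : Episode α where
  nodes := G.nodes
  edge := fun x y => G.edge x y ∧ (x, y) ≠ e
  lab := G.lab
  edge_mem := by rintro x y ⟨h, -⟩; exact G.edge_mem h

/-- `G − v`: remove a node together with all incident edges. -/
def eraseNode (G : Episode α) (w : ℕ) : Episode α where
  nodes := G.nodes.erase w
  edge := fun x y => G.edge x y ∧ x ≠ w ∧ y ≠ w
  lab := G.lab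
  edge_mem := by
    rintro x y ⟨h, hx, hy⟩
    exact ⟨Finset.mem_erase.mpr ⟨hx, (G.edge_mem h).1⟩,
      Finset.mem_erase.mpr ⟨hy, (G.edge_mem h).2⟩⟩

/-- `G + e`: add an edge. -/
def addEdge (G : Episode α) (e : ℕ × ℕ) : Episode α where
  nodes := G.nodes ∪ {e.1, e.2}
  edge := fun x y => G.edge x y ∨ (x, y) = e
  lab := G.lab
  edge_mem := by
    rintro x y (h | h)
    · exact ⟨Finset.mem_union_left _ (G.edge_mem h).1,
        Finset.mem_union_left _ (G.edge_mem h).2⟩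
    · cases h
      exact ⟨Finset.mem_union_right _ (by simp), Finset.mem_union_right _ (by simp)⟩

/-- A skeleton edge: an edge `(v,w)` such that there is no two-step path
`v → u → w`. -/
def IsSkeletonEdge (G : Episode α) (e : ℕ × ℕ) : Prop :=
  G.edge e.1 e.2 ∧ ¬ ∃ u, G.edge e.1 u ∧ G.edge u e.2

/-- A proper skeleton edge: a skeleton edge whose endpoints carry different
labels. -/
def IsProperSkeletonEdge (G : Episode α) (e : ℕ × ℕ) : Prop :=
  IsSkeletonEdge G e ∧ G.lab e.1 ≠ G.lab e.2

/-- The set of edges of `G`, as a set of pairs. -/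
def edgeSet (G : Episode α) : Set (ℕ × ℕ) := {p | G.edge p.1 p.2}

/-- Lexicographic order on edges (using the canonical order of the nodes). -/
def edgeLT (e f : ℕ × ℕ) : Prop := e.1 < f.1 ∨ (e.1 = f.1 ∧ e.2 < f.2)

/-- `e` is the last (lexicographically largest) proper skeleton edge of `G`. -/
def IsLastEdge (G : Episode α) (e : ℕ × ℕ) : Prop :=
  IsProperSkeletonEdge G e ∧
    ∀ f, IsProperSkeletonEdge G f → f = e ∨ edgeLT f e

/-- A solitary node: a node with no incident edges. -/
def Solitary (G : Episode α) (v : ℕ) : Prop :=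
  v ∈ G.nodes ∧ ∀ u, ¬ G.edge u v ∧ ¬ G.edge v u

/-- A source node: a node with no incoming edges. -/
def IsSource (G : Episode α) (v : ℕ) : Prop := v ∈ G.nodes ∧ ∀ u, ¬ G.edge u v

/-- A proper skeleton edge `e` of `G` is derivable if `G ⪯ icl(G − e)`. -/
noncomputable def DerivableEdge [LinearOrder α] (s : List α) (ρ : ℕ)
    (G : Episode α) (e : ℕ × ℕ) : Prop :=
  IsProperSkeletonEdge G e ∧ Subep G (icl s ρ (G.eraseEdge e))

/-- A solitary node `v` of `G` is derivable if `G ⪯ icl(G − v)`. -/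
noncomputable def DerivableNode [LinearOrder α] (s : List α) (ρ : ℕ)
    (G : Episode α) (v : ℕ) : Prop :=
  Solitary G v ∧ Subep G (icl s ρ (G.eraseNode v))

/-- `GreedyFrom s t G f`: `f` is the greedy mapping of `G` in the suffix of `s`
starting at (0-based) position `t`, recording absolute indices of `s`:
repeatedly map the source node of `G` whose label has the earliest remaining
occurrence to that position, and recurse on the episode with that node
removed and the part of the sequence after that position. -/
inductive GreedyFrom (s : List α) : ℕ → Episode α → (ℕ → ℕ) → Prop
  | empty (t : ℕ) (G : Episode α) (f : ℕ → ℕ) (hG : G.nodes = ∅) :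
      GreedyFrom s t G f
  | step (t : ℕ) (G : Episode α) (f : ℕ → ℕ) (v k : ℕ)
      (hv : G.IsSource v) (ht : t ≤ k) (hk : k < s.length)
      (hlab : s.get ⟨k, hk⟩ = G.lab v)
      (hmin : ∀ j (hj : j < s.length), t ≤ j → j < k →
        ¬ ∃ w, G.IsSource w ∧ s.get ⟨j, hj⟩ = G.lab w)
      (hfv : f v = k)
      (hrec : GreedyFrom s (k + 1) (G.eraseNode v) f) :
      GreedyFrom s t G f

/-- One step of removing a derivable proper skeleton edge or a derivable
solitary node. -/
noncomputable def RemStep [LinearOrder α] (s : List α) (ρ : ℕ) :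
    Episode α → Episode α → Prop := fun G G' =>
  (∃ e, DerivableEdge s ρ G e ∧ G' = G.eraseEdge e) ∨
  (∃ v, DerivableNode s ρ G v ∧ G' = G.eraseNode v)

end Episode

/-!
The key observation is that `H = G₁ + e₂` has exactly the edges of `G₂ + e₁`. Adding an edge
`(a, b)` to a transitively closed episode keeps it transitively closed iff every predecessor of `a`
gets an edge to `b` and every successor of `b` one from `a`. A predecessor `u` of `x₂` in `G₁` is
one in `G₂`, where transitivity through `e₂` gives `(u, y₂)`, unless `(u, x₂) = e₁`; then
`(x₁, y₂) ∈ E(G₁)` is exactly what is needed. Dually for successors of `y₂`, and `x₁ = y₂`,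
`x₂ = y₁` together would close a cycle: this yields the three cases. Strictness is inherited from
`G₁`. A path `x → u → y` in `H` around a new edge `(x, y)` would, since `H` has no loops, lie in
`G₁` (for `e₂`) or in `G₂` (for `e₁`), whose transitivity would then contain `(x, y)`.
-/

namespace Episode

variable {α : Type*}

theorem transClosed_iff {G : Episode α} :
    G.TransClosed ↔ ∀ ⦃u v w⦄, G.edge u v → G.edge v w → G.edge u w :=
  ⟨fun h _ _ _ huv hvw => h (.tail (.single huv) hvw),
    fun h _ _ huv => @Relation.transGen_minimal _ _ _ ⟨h⟩ le_rfl _ _ huv⟩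

theorem Strict.addEdge {G : Episode α} (hG : G.Strict) {e : ℕ × ℕ}
    (he₁ : e.1 ∈ G.nodes) (he₂ : e.2 ∈ G.nodes) : (G.addEdge e).Strict := by
  have hnodes : (G.addEdge e).nodes = G.nodes := by
    simp only [Episode.addEdge, Finset.union_eq_left, Finset.insert_subset_iff,
      Finset.singleton_subset_iff]
    exact ⟨he₁, he₂⟩
  have hmono := Relation.TransGen.mono (p := (G.addEdge e).edge) fun _ _ => Or.inl
  intro u hu v hv huv hlab
  rw [hnodes] at hu hv
  exact (hG u hu v hv huv hlab).imp (hmono _ _) (hmono _ _)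

theorem transClosed_addEdge_iff {G : Episode α} (hG : G.TransClosed) {a b : ℕ}
    (hH : (G.addEdge (a, b)).Acyclic) :
    (G.addEdge (a, b)).TransClosed ↔
      (∀ u, G.edge u a → (G.addEdge (a, b)).edge u b) ∧
        ∀ w, G.edge b w → (G.addEdge (a, b)).edge a w := by
  rw [transClosed_iff] at hG ⊢
  refine ⟨fun h => ⟨fun u hu => h (Or.inl hu) (Or.inr rfl),
    fun w hw => h (Or.inr rfl) (Or.inl hw)⟩, ?_⟩
  rintro ⟨hpred, hsucc⟩ u v w (huv | huv) (hvw | hvw)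
  · exact Or.inl (hG huv hvw)
  · obtain ⟨rfl, rfl⟩ := Prod.mk.inj hvw
    exact hpred u huv
  · obtain ⟨rfl, rfl⟩ := Prod.mk.inj huv
    exact hsucc w hvw
  · obtain ⟨rfl, rfl⟩ := Prod.mk.inj huv
    obtain ⟨rfl, -⟩ := Prod.mk.inj hvw
    exact (hH _ (.single (Or.inr rfl))).elim

theorem isSkeletonEdge_of_edge_iff {G H : Episode α} (hG : G.TransClosed) {a b : ℕ}
    (hab : ¬ G.edge a b) (hH : H.Acyclic)
    (hedge : ∀ x y, H.edge x y ↔ G.edge x y ∨ (x, y) = (a, b)) :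
    H.IsSkeletonEdge (a, b) := by
  refine ⟨(hedge a b).2 (Or.inr rfl), ?_⟩
  rintro ⟨u, hau, hub⟩
  rcases (hedge a u).1 hau with hau' | hau'
  · rcases (hedge u b).1 hub with hub' | hub'
    · exact hab (transClosed_iff.1 hG hau' hub')
    · obtain ⟨rfl, -⟩ := Prod.mk.inj hub'
      exact hH u (.single hau)
  · obtain ⟨-, rfl⟩ := Prod.mk.inj hau'
    exact hH u (.single hub)

theorem edge_of_edgeSet_sdiff_eq_singleton {G₁ G₂ : Episode α} {e : ℕ × ℕ}
    (he : edgeSet G₁ \ edgeSet G₂ = {e}) {x y : ℕ} (hxy : G₁.edge x y) (hne : (x, y) ≠ e) :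
    G₂.edge x y := by
  by_contra h
  exact hne ((Set.eq_singleton_iff_unique_mem.1 he).2 _ ⟨hxy, h⟩)

theorem addEdge_edge_iff {G₁ G₂ : Episode α} {e₁ e₂ : ℕ × ℕ}
    (he₁ : edgeSet G₁ \ edgeSet G₂ = {e₁}) (he₂ : edgeSet G₂ \ edgeSet G₁ = {e₂}) (x y : ℕ) :
    (G₁.addEdge e₂).edge x y ↔ G₂.edge x y ∨ (x, y) = e₁ := by
  have he₁G₁ : e₁ ∈ edgeSet G₁ := (Set.eq_singleton_iff_unique_mem.1 he₁).1.1
  have he₂G₂ : e₂ ∈ edgeSet G₂ := (Set.eq_singleton_iff_unique_mem.1 he₂).1.1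
  constructor
  · rintro (h | rfl)
    · by_cases hxy : (x, y) = e₁
      · exact Or.inr hxy
      · exact Or.inl (edge_of_edgeSet_sdiff_eq_singleton he₁ h hxy)
    · exact Or.inl he₂G₂
  · rintro (h | rfl)
    · by_cases hxy : (x, y) = e₂
      · exact Or.inr hxy
      · exact Or.inl (edge_of_edgeSet_sdiff_eq_singleton he₂ h hxy)
    · exact Or.inl he₁G₁

theorem forall_edge_to_imp_addEdge_edge_iff {G₁ G₂ : Episode α} (hG₁ : G₁.Acyclic)
    (hG₂ : G₂.TransClosed) {x₁ y₁ x₂ y₂ : ℕ} (he₁ : edgeSet G₁ \ edgeSet G₂ = {(x₁, y₁)})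
    (he₂ : edgeSet G₂ \ edgeSet G₁ = {(x₂, y₂)}) :
    (∀ u, G₁.edge u x₂ → (G₁.addEdge (x₂, y₂)).edge u y₂) ↔ (x₂ = y₁ → G₁.edge x₁ y₂) := by
  have he₁G₁ : G₁.edge x₁ y₁ := (Set.eq_singleton_iff_unique_mem.1 he₁).1.1
  have he₂G₂ : G₂.edge x₂ y₂ := (Set.eq_singleton_iff_unique_mem.1 he₂).1.1
  constructor
  · rintro h rfl
    refine (h x₁ he₁G₁).resolve_right fun hx => ?_
    obtain ⟨rfl, -⟩ := Prod.mk.inj hx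
    exact hG₁ _ (.single he₁G₁)
  · intro h u hu
    by_cases hu₁ : (u, x₂) = (x₁, y₁)
    · obtain ⟨rfl, rfl⟩ := Prod.mk.inj hu₁
      exact Or.inl (h rfl)
    · refine (addEdge_edge_iff he₁ he₂ u y₂).2 (Or.inl ?_)
      exact transClosed_iff.1 hG₂ (edge_of_edgeSet_sdiff_eq_singleton he₁ hu hu₁) he₂G₂

theorem forall_edge_from_imp_addEdge_edge_iff {G₁ G₂ : Episode α} (hG₁ : G₁.Acyclic)
    (hG₂ : G₂.TransClosed) {x₁ y₁ x₂ y₂ : ℕ} (he₁ : edgeSet G₁ \ edgeSet G₂ = {(x₁, y₁)})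
    (he₂ : edgeSet G₂ \ edgeSet G₁ = {(x₂, y₂)}) :
    (∀ w, G₁.edge y₂ w → (G₁.addEdge (x₂, y₂)).edge x₂ w) ↔ (x₁ = y₂ → G₁.edge x₂ y₁) := by
  have he₁G₁ : G₁.edge x₁ y₁ := (Set.eq_singleton_iff_unique_mem.1 he₁).1.1
  have he₂G₂ : G₂.edge x₂ y₂ := (Set.eq_singleton_iff_unique_mem.1 he₂).1.1
  constructor
  · rintro h rfl
    refine (h y₁ he₁G₁).resolve_right fun hy => ?_
    obtain ⟨-, rfl⟩ := Prod.mk.inj hy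
    exact hG₁ _ (.single he₁G₁)
  · intro h w hw
    by_cases hw₁ : (y₂, w) = (x₁, y₁)
    · obtain ⟨rfl, rfl⟩ := Prod.mk.inj hw₁
      exact Or.inl (h rfl)
    · refine (addEdge_edge_iff he₁ he₂ x₂ w).2 (Or.inl ?_)
      exact transClosed_iff.1 hG₂ he₂G₂ (edge_of_edgeSet_sdiff_eq_singleton he₁ hw hw₁)

end Episode

open Episode in
theorem stmt13_general {α : Type*} (G₁ G₂ : Episode α) (hG₁ : inS G₁) (hG₂ : inS G₂)
    (hnodes : G₁.nodes = G₂.nodes)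
    (x₁ y₁ x₂ y₂ : ℕ)
    (he₁ : edgeSet G₁ \ edgeSet G₂ = {(x₁, y₁)})
    (he₂ : edgeSet G₂ \ edgeSet G₁ = {(x₂, y₂)})
    (hacyc : (G₁.addEdge (x₂, y₂)).Acyclic) :
    (inS (G₁.addEdge (x₂, y₂)) ↔
      ((x₁ ≠ y₂ ∧ x₂ ≠ y₁) ∨
       (x₁ ≠ y₂ ∧ x₂ = y₁ ∧ G₁.edge x₁ y₂) ∨
       (x₁ = y₂ ∧ x₂ ≠ y₁ ∧ G₁.edge x₂ y₁))) ∧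
    (inS (G₁.addEdge (x₂, y₂)) →
      IsSkeletonEdge (G₁.addEdge (x₂, y₂)) (x₁, y₁) ∧
      IsSkeletonEdge (G₁.addEdge (x₂, y₂)) (x₂, y₂)) := by
  have he₁G : G₁.edge x₁ y₁ ∧ ¬ G₂.edge x₁ y₁ := (Set.eq_singleton_iff_unique_mem.1 he₁).1
  have he₂G : G₂.edge x₂ y₂ ∧ ¬ G₁.edge x₂ y₂ := (Set.eq_singleton_iff_unique_mem.1 he₂).1
  have hno_two_cycle : ¬ (x₁ = y₂ ∧ x₂ = y₁) := by
    rintro ⟨rfl, rfl⟩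
    exact hacyc _ (.tail (.single (Or.inr rfl)) (Or.inl he₁G.1))
  have hstrict : (G₁.addEdge (x₂, y₂)).Strict := by
    obtain ⟨hx₂, hy₂⟩ := G₂.edge_mem he₂G.1
    exact hG₁.2.2.addEdge (hnodes ▸ hx₂) (hnodes ▸ hy₂)
  have hS : inS (G₁.addEdge (x₂, y₂)) ↔
      (x₂ = y₁ → G₁.edge x₁ y₂) ∧ (x₁ = y₂ → G₁.edge x₂ y₁) := by
    rw [inS, transClosed_addEdge_iff hG₁.2.1 hacyc,
      forall_edge_to_imp_addEdge_edge_iff hG₁.1 hG₂.2.1 he₁ he₂,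
      forall_edge_from_imp_addEdge_edge_iff hG₁.1 hG₂.2.1 he₁ he₂]
    exact ⟨fun h => h.2.1, fun h => ⟨hacyc, h, hstrict⟩⟩
  refine ⟨hS.trans (by tauto), fun _ => ⟨?_, ?_⟩⟩
  · exact isSkeletonEdge_of_edge_iff hG₂.2.1 he₁G.2 hacyc (addEdge_edge_iff he₁ he₂)
  · exact isSkeletonEdge_of_edge_iff hG₁.2.1 he₂G.2 hacyc fun _ _ => Iff.rfl

open Episode in
/-- Joining two episodes.  Let `G₁, G₂ ∈ 𝒮` have identical nodes and `N` edges
each, sharing `N − 1` edges, with unique edges `e₁ = (x₁,y₁) ∈ E(G₁) ∖ E(G₂)`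
and `e₂ = (x₂,y₂) ∈ E(G₂) ∖ E(G₁)`, and let `H = G₁ + e₂` have no cycles.
Then `H ∈ 𝒮` iff one of the three stated conditions holds, and if `H ∈ 𝒮`
then `e₁` and `e₂` are skeleton edges of `H`. -/
theorem stmt13 {α : Type*} (G₁ G₂ : Episode α) (hG₁ : inS G₁) (hG₂ : inS G₂)
    (hnodes : G₁.nodes = G₂.nodes)
    (hlab : ∀ v ∈ G₁.nodes, G₁.lab v = G₂.lab v)
    (N : ℕ) (hc₁ : (edgeSet G₁).ncard = N) (hc₂ : (edgeSet G₂).ncard = N)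
    (hshare : (edgeSet G₁ ∩ edgeSet G₂).ncard = N - 1)
    (x₁ y₁ x₂ y₂ : ℕ)
    (he₁ : edgeSet G₁ \ edgeSet G₂ = {(x₁, y₁)})
    (he₂ : edgeSet G₂ \ edgeSet G₁ = {(x₂, y₂)})
    (hacyc : (G₁.addEdge (x₂, y₂)).Acyclic) :
    (inS (G₁.addEdge (x₂, y₂)) ↔
      ((x₁ ≠ y₂ ∧ x₂ ≠ y₁) ∨
       (x₁ ≠ y₂ ∧ x₂ = y₁ ∧ G₁.edge x₁ y₂) ∨
       (x₁ = y₂ ∧ x₂ ≠ y₁ ∧ G₁.edge x₂ y₁))) ∧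
    (inS (G₁.addEdge (x₂, y₂)) →
      IsSkeletonEdge (G₁.addEdge (x₂, y₂)) (x₁, y₁) ∧
      IsSkeletonEdge (G₁.addEdge (x₂, y₂)) (x₂, y₂)) :=
  stmt13_general G₁ G₂ hG₁ hG₂ hnodes x₁ y₁ x₂ y₂ he₁ he₂ hacyc
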